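/- The sum over k ≥ 1 of h_k^{(2)}/k³ equals (35/4)·ζ(2)·ζ(3) − (31/2)·ζ(5). -/

import Mathlib

open scoped BigOperators

/-- Odd harmonic number `h_k^{(n)} = ∑_{i=1}^k 1/(2i-1)^n`. -/
noncomputable def h (n k : ℕ) : ℝ := ∑ i ∈ Finset.range k, (1 : ℝ) / (2 * (i : ℝ) + 1) ^ n

/-- Generalized harmonic number `H_k^{(n)} = ∑_{i=1}^k 1/i^n`. -/
noncomputable def H (n k : ℕ) : ℝ := ∑ i ∈ Finset.range k, (1 : ℝ) / ((i : ℝ) + 1) ^ n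

/-- Riemann zeta value at a positive integer `m ≥ 2`: `ζ(m) = ∑_{n≥1} 1/n^m`. -/
noncomputable def Z (m : ℕ) : ℝ := ∑' n : ℕ+, (1 : ℝ) / ((n : ℕ) : ℝ) ^ m

/-!
Since `1 / k³ = 8 / (2k)³`, the sum is `8 ∑ 1 / (m² n³)` over odd `m` and even `n > m`. Double sums
of this kind over progressions `c + 2ℕ` satisfy linear relations. A product of two single sums
`∑ 1 / (2i + c)^p` splits along the diagonal; alternatively, the partial fraction decomposition of
`1 / (m² n³)` in `m`, `n`, `m + n` turns the same product into sums over the pairs `m < m + n`.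
Finally, the Tornheim-type series `∑ 1 / (m³ n (m + n))` over odd `m` and all `n ≥ 1` is computed
once by partial fractions and once by telescoping in `n`, which gives `∑ H_m / m⁴`. The single sums
are `(1 - 2^{-s}) ζ(s)` and `2^{-s} ζ(s)`, and the relations determine the wanted double sum.
-/

open Finset Filter Topology Function

theorem Finset.sum_range_two_mul {M : Type*} [AddCommMonoid M] (f : ℕ → M) (n : ℕ) :
    ∑ i ∈ range (2 * n), f i = ∑ i ∈ range n, f (2 * i) + ∑ i ∈ range n, f (2 * i + 1) := by
  induction n with
  | zero => simp
  | succ n ih =>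
    rw [Nat.mul_succ, sum_range_succ, sum_range_succ, ih, sum_range_succ, sum_range_succ]
    abel

section TsumSplitting

variable {α : Type*} [NormedAddCommGroup α] [CompleteSpace α]

theorem Summable.tsum_eq_add_of_range_eq_compl {β γ δ : Type*} {f : β → α} (hf : Summable f)
    {g₁ : γ → β} {g₂ : δ → β} (h₁ : Injective g₁) (h₂ : Injective g₂)
    (hc : Set.range g₂ = (Set.range g₁)ᶜ) :
    ∑' x, f x = ∑' y, f (g₁ y) + ∑' z, f (g₂ z) :=
  (HasSum.add_isCompl (hc ▸ isCompl_compl) (h₁.hasSum_range_iff.2 (hf.comp_injective h₁).hasSum)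
    (h₂.hasSum_range_iff.2 (hf.comp_injective h₂).hasSum)).tsum_eq

theorem Summable.tsum_prod_eq_add_triangles {f : ℕ × ℕ → α} (hf : Summable f) :
    ∑' p, f p = ∑' p : ℕ × ℕ, f (p.1, p.1 + p.2) + ∑' p : ℕ × ℕ, f (p.1 + p.2 + 1, p.1) := by
  refine hf.tsum_eq_add_of_range_eq_compl (fun p q h ↦ ?_) (fun p q h ↦ ?_) ?_
  · simp only [Prod.mk.injEq] at h; ext <;> omega
  · simp only [Prod.mk.injEq] at h; ext <;> omega
  · ext ⟨i, j⟩
    simp only [Set.mem_range, Prod.mk.injEq, Set.mem_compl_iff, not_exists, not_and, Prod.exists]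
    refine ⟨by rintro ⟨a, b, rfl, rfl⟩; omega, fun h ↦ ⟨j, i - j - 1, ?_, rfl⟩⟩
    have := h i (j - i)
    omega

theorem Summable.tsum_prod_eq_add_zero_succ {f : ℕ × ℕ → α} (hf : Summable f) :
    ∑' p, f p = ∑' i, f (i, 0) + ∑' p : ℕ × ℕ, f (p.1, p.2 + 1) := by
  refine hf.tsum_eq_add_of_range_eq_compl (fun i j h ↦ by simpa using h)
    (fun p q h ↦ by simp only [Prod.mk.injEq] at h; ext <;> omega) ?_
  ext ⟨i, j⟩
  simp only [Set.mem_range, Prod.mk.injEq, Set.mem_compl_iff, not_exists, not_and, Prod.exists]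
  refine ⟨by rintro ⟨a, b, rfl, rfl⟩ _ _; omega, fun h ↦ ⟨i, j - 1, rfl, ?_⟩⟩
  have := h i rfl
  omega

end TsumSplitting

theorem HasSum.sum_antidiagonal {α : Type*} [AddCommMonoid α] [TopologicalSpace α]
    [ContinuousAdd α] [RegularSpace α] {f : ℕ × ℕ → α} {a : α} (h : HasSum f a) :
    HasSum (fun n ↦ ∑ p ∈ antidiagonal n, f p) a :=
  (HasAntidiagonal.sigmaAntidiagonalEquivProd.hasSum_iff.2 h).sigma fun n ↦
    Finset.hasSum (antidiagonal n) f

theorem hasSum_sub_add_of_antitone {v : ℕ → ℝ} (hv : Antitone v)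
    (h0 : Tendsto v atTop (𝓝 0)) (k : ℕ) :
    HasSum (fun n ↦ v n - v (n + k)) (∑ i ∈ range k, v i) := by
  refine (hasSum_iff_tendsto_nat_of_nonneg (fun n ↦ sub_nonneg.2 (hv (by omega))) _).2 ?_
  have hpartial (N : ℕ) :
      ∑ n ∈ range N, (v n - v (n + k)) = ∑ i ∈ range k, (v i - v (N + i)) := by
    have hrow (n : ℕ) : v n - v (n + k) = ∑ i ∈ range k, (v (n + i) - v (n + i + 1)) := by
      simpa [add_assoc] using (sum_range_sub' (fun i ↦ v (n + i)) k).symm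
    have hcol (i : ℕ) : ∑ n ∈ range N, (v (n + i) - v (n + i + 1)) = v i - v (N + i) := by
      simpa [add_right_comm _ 1 i] using sum_range_sub' (fun n ↦ v (n + i)) N
    simp_rw [hrow]
    rw [sum_comm]
    exact sum_congr rfl fun i _ ↦ hcol i
  simp_rw [hpartial]
  simpa using tendsto_finsetSum (range k) fun i _ ↦
    tendsto_const_nhds.sub (h0.comp (tendsto_add_atTop_nat i))

namespace OddEulerSum

noncomputable def progZeta (c : ℝ) (p : ℕ) : ℝ := ∑' i : ℕ, 1 / (2 * (i : ℝ) + c) ^ p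

theorem summable_progZeta {c : ℝ} (hc : 0 < c) {p : ℕ} (hp : 2 ≤ p) :
    Summable fun i : ℕ ↦ 1 / (2 * (i : ℝ) + c) ^ p := by
  have h := ((Real.summable_one_div_nat_add_rpow (c / 2) p).2 (by exact_mod_cast hp)).mul_left
    (1 / 2 ^ p)
  refine h.congr fun i ↦ ?_
  have hi : 0 < (i : ℝ) + c / 2 := by positivity
  rw [abs_of_pos hi, Real.rpow_natCast, div_mul_div_comm, one_mul, ← mul_pow]
  congr 2
  ring

theorem hasSum_progZeta {c : ℝ} (hc : 0 < c) {p : ℕ} (hp : 2 ≤ p) :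
    HasSum (fun i : ℕ ↦ 1 / (2 * (i : ℝ) + c) ^ p) (progZeta c p) :=
  (summable_progZeta hc hp).hasSum

theorem Z_eq_tsum_nat (s : ℕ) : Z s = ∑' n : ℕ, 1 / ((n : ℝ) + 1) ^ s := by
  rw [Z, tsum_pnat_eq_tsum_succ (f := fun n : ℕ ↦ 1 / (n : ℝ) ^ s)]
  push_cast
  rfl

theorem progZeta_two (s : ℕ) : progZeta 2 s = Z s / 2 ^ s := by
  rw [Z_eq_tsum_nat, ← tsum_div_const]
  refine tsum_congr fun n ↦ ?_
  rw [div_div, ← mul_pow]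
  congr 2
  ring

theorem progZeta_one {s : ℕ} (hs : 2 ≤ s) : progZeta 1 s = Z s - Z s / 2 ^ s := by
  have heven (k : ℕ) : 1 / (((2 * k : ℕ) : ℝ) + 1) ^ s = 1 / (2 * (k : ℝ) + 1) ^ s := by
    push_cast; rfl
  have hodd (k : ℕ) : 1 / (((2 * k + 1 : ℕ) : ℝ) + 1) ^ s = 1 / (2 * (k : ℝ) + 2) ^ s := by
    push_cast; ring
  rw [← progZeta_two, eq_sub_iff_add_eq, Z_eq_tsum_nat, ← tsum_even_add_odd
    (by simpa only [heven] using summable_progZeta one_pos hs)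
    (by simpa only [hodd] using summable_progZeta two_pos hs)]
  simp only [heven, hodd, progZeta]

/-- `eulerSum c d p q = ∑_{0 ≤ i ≤ k} 1 / ((2i + c)^p (2k + d)^q)`, indexed by `(i, k - i)`. -/
noncomputable def eulerTerm (c d : ℝ) (p q : ℕ) (ij : ℕ × ℕ) : ℝ :=
  1 / ((2 * (ij.1 : ℝ) + c) ^ p * (2 * ((ij.1 : ℝ) + ij.2) + d) ^ q)

noncomputable def eulerSum (c d : ℝ) (p q : ℕ) : ℝ := ∑' ij, eulerTerm c d p q ij

theorem summable_eulerTerm {c d : ℝ} (hc : 1 ≤ c) (hcd : c ≤ d) {p q : ℕ} (hq : 2 ≤ q)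
    (hpq : 4 ≤ p + q) : Summable (eulerTerm c d p q) := by
  have h := summable_progZeta one_pos le_rfl
  have hprod := h.mul_of_nonneg h (fun i ↦ by positivity) (fun i ↦ by positivity)
  have hd : 0 < d := by linarith
  refine hprod.of_nonneg_of_le (fun ij ↦ by unfold eulerTerm; positivity) fun ⟨i, j⟩ ↦ ?_
  simp only [eulerTerm, one_div_mul_one_div]
  set x := 2 * (i : ℝ) + c
  set y := 2 * ((i : ℝ) + j) + d
  have hx : 1 ≤ x := by linarith [i.cast_nonneg (α := ℝ)]
  have hxy : x ≤ y := by linarith [j.cast_nonneg (α := ℝ)]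
  refine one_div_le_one_div_of_le (by positivity) ?_
  calc (2 * (i : ℝ) + 1) ^ 2 * (2 * (j : ℝ) + 1) ^ 2 ≤ x ^ 2 * y ^ 2 := by
        gcongr <;> linarith [i.cast_nonneg (α := ℝ)]
    _ ≤ x ^ (p + (q - 2)) * y ^ 2 := by gcongr; omega
    _ = x ^ p * x ^ (q - 2) * y ^ 2 := by rw [pow_add]
    _ ≤ x ^ p * y ^ (q - 2) * y ^ 2 := by gcongr
    _ = x ^ p * y ^ q := by rw [mul_assoc, ← pow_add, Nat.sub_add_cancel hq]

theorem hasSum_iterated_eulerSum {c d : ℝ} {p q : ℕ} (h : Summable (eulerTerm c d p q)) :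
    HasSum (fun k : ℕ ↦ 1 / (2 * (k : ℝ) + d) ^ q * ∑ i ∈ range (k + 1), 1 / (2 * (i : ℝ) + c) ^ p)
      (eulerSum c d p q) := by
  refine h.hasSum.sum_antidiagonal.congr_fun fun k ↦ ?_
  rw [mul_sum, ← Nat.sum_antidiagonal_eq_sum_range_succ (fun i _ ↦ _)]
  refine sum_congr rfl fun ij hij ↦ ?_
  rw [HasAntidiagonal.mem_antidiagonal] at hij
  rw [eulerTerm, ← Nat.cast_add, hij, one_div_mul_one_div, mul_comm]

theorem hasSum_iterated_eulerSum_add_two {c d : ℝ} {p q : ℕ}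
    (h : Summable (eulerTerm c (d + 2) p q)) :
    HasSum (fun k : ℕ ↦ 1 / (2 * (k : ℝ) + d) ^ q * ∑ i ∈ range k, 1 / (2 * (i : ℝ) + c) ^ p)
      (eulerSum c (d + 2) p q) := by
  refine (hasSum_nat_add_iff' 1).1 ?_
  simpa [add_assoc, mul_add, add_comm 2 d] using hasSum_iterated_eulerSum h

theorem hasSum_progZeta_mul {c d : ℝ} (hc : 0 < c) (hd : 0 < d) {p q : ℕ} (hp : 2 ≤ p)
    (hq : 2 ≤ q) :
    HasSum (fun ij : ℕ × ℕ ↦ 1 / ((2 * (ij.1 : ℝ) + c) ^ p * (2 * (ij.2 : ℝ) + d) ^ q))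
      (progZeta c p * progZeta d q) := by
  have hf := summable_progZeta hc hp
  have hg := summable_progZeta hd hq
  simpa only [one_div_mul_one_div, progZeta] using hf.hasSum.mul hg.hasSum
    (hf.mul_of_nonneg hg (fun i ↦ by positivity) fun j ↦ by positivity)

theorem progZeta_mul_progZeta {c d : ℝ} (hc : 0 < c) (hd : 0 < d) {p q : ℕ} (hp : 2 ≤ p)
    (hq : 2 ≤ q) : progZeta c p * progZeta d q = eulerSum c d p q + eulerSum d (c + 2) q p := by
  rw [← (hasSum_progZeta_mul hc hd hp hq).tsum_eq,
    (hasSum_progZeta_mul hc hd hp hq).summable.tsum_prod_eq_add_triangles, eulerSum, eulerSum]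
  congr 1 <;> refine tsum_congr fun ij ↦ ?_ <;> simp only [eulerTerm] <;> push_cast <;> ring_nf

theorem eulerSum_self {c : ℝ} (hc : 1 ≤ c) {p q : ℕ} (hq : 2 ≤ q) (hpq : 4 ≤ p + q) :
    eulerSum c c p q = progZeta c (p + q) + eulerSum c (c + 2) p q := by
  rw [eulerSum, (summable_eulerTerm hc le_rfl hq hpq).tsum_prod_eq_add_zero_succ, progZeta,
    eulerSum]
  congr 1 <;> refine tsum_congr fun ij ↦ ?_ <;> simp only [eulerTerm] <;> push_cast <;> ring_nf

theorem one_div_sq_mul_cube_eq {m n : ℝ} (hm : 0 < m) (hn : 0 < n) :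
    1 / (m ^ 2 * n ^ 3) = 1 / (m ^ 2 * (m + n) ^ 3) + 3 * (1 / (m * (m + n) ^ 4))
      + 1 / (n ^ 3 * (m + n) ^ 2) + 2 * (1 / (n ^ 2 * (m + n) ^ 3))
      + 3 * (1 / (n * (m + n) ^ 4)) := by
  field_simp
  ring

theorem one_div_cube_mul_mul_add_eq {m n : ℝ} (hm : 0 < m) (hn : 0 < n) :
    1 / (m ^ 3 * n * (m + n)) = 1 / (m ^ 3 * (m + n) ^ 2) + 1 / (m ^ 2 * (m + n) ^ 3)
      + 1 / (m * (m + n) ^ 4) + 1 / (n * (m + n) ^ 4) := by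
  field_simp
  ring

theorem hasSum_eulerTerm {c d : ℝ} (hc : 1 ≤ c) (hcd : c ≤ d) {p q : ℕ} (hq : 2 ≤ q)
    (hpq : 4 ≤ p + q) : HasSum (eulerTerm c d p q) (eulerSum c d p q) :=
  (summable_eulerTerm hc hcd hq hpq).hasSum

theorem hasSum_eulerTerm_swap {c d : ℝ} (hc : 1 ≤ c) (hcd : c ≤ d) {p q : ℕ} (hq : 2 ≤ q)
    (hpq : 4 ≤ p + q) :
    HasSum (fun ij : ℕ × ℕ ↦ eulerTerm c d p q ij.swap) (eulerSum c d p q) :=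
  (Equiv.prodComm ℕ ℕ).hasSum_iff.2 (hasSum_eulerTerm hc hcd hq hpq)

theorem progZeta_sq_mul_progZeta_cube {c d : ℝ} (hc : 1 ≤ c) (hd : 1 ≤ d) :
    progZeta c 2 * progZeta d 3 = eulerSum c (c + d) 2 3 + 3 * eulerSum c (c + d) 1 4
      + eulerSum d (c + d) 3 2 + 2 * eulerSum d (c + d) 2 3 + 3 * eulerSum d (c + d) 1 4 := by
  have hcd : c ≤ c + d := by linarith
  have hdc : d ≤ c + d := by linarith
  refine (hasSum_progZeta_mul (by positivity) (by positivity) le_rfl (by norm_num)).unique ?_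
  convert (((((hasSum_eulerTerm (p := 2) (q := 3) hc hcd (by norm_num) (by norm_num)).add
    ((hasSum_eulerTerm (p := 1) (q := 4) hc hcd (by norm_num) (by norm_num)).mul_left 3)).add
    (hasSum_eulerTerm_swap (p := 3) (q := 2) hd hdc (by norm_num) (by norm_num))).add
    ((hasSum_eulerTerm_swap (p := 2) (q := 3) hd hdc (by norm_num) (by norm_num)).mul_left 2)).add
    ((hasSum_eulerTerm_swap (p := 1) (q := 4) hd hdc (by norm_num) (by norm_num)).mul_left 3))
    using 2 with ⟨a, b⟩
  have hsum : 2 * ((a : ℝ) + b) + (c + d) = (2 * a + c) + (2 * b + d) := by ring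
  have hsum' : 2 * ((b : ℝ) + a) + (c + d) = (2 * a + c) + (2 * b + d) := by ring
  simp only [eulerTerm, Prod.swap_prod_mk, pow_one, hsum, hsum']
  exact one_div_sq_mul_cube_eq (by positivity) (by positivity)

noncomputable def tornheimTerm (c d : ℝ) (ij : ℕ × ℕ) : ℝ :=
  1 / ((2 * (ij.1 : ℝ) + c) ^ 3 * (2 * (ij.2 : ℝ) + d) * (2 * ((ij.1 : ℝ) + ij.2) + c + d))

theorem hasSum_tornheimTerm {c d : ℝ} (hc : 1 ≤ c) (hd : 1 ≤ d) :
    HasSum (tornheimTerm c d) (eulerSum c (c + d) 3 2 + eulerSum c (c + d) 2 3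
      + eulerSum c (c + d) 1 4 + eulerSum d (c + d) 1 4) := by
  have hcd : c ≤ c + d := by linarith
  have hdc : d ≤ c + d := by linarith
  convert (((hasSum_eulerTerm (p := 3) (q := 2) hc hcd (by norm_num) (by norm_num)).add
    (hasSum_eulerTerm (p := 2) (q := 3) hc hcd (by norm_num) (by norm_num))).add
    (hasSum_eulerTerm (p := 1) (q := 4) hc hcd (by norm_num) (by norm_num))).add
    (hasSum_eulerTerm_swap (p := 1) (q := 4) hd hdc (by norm_num) (by norm_num)) using 1
  ext ⟨a, b⟩
  have hsum : 2 * ((a : ℝ) + b) + (c + d) = (2 * a + c) + (2 * b + d) := by ring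
  have hsum' : 2 * ((b : ℝ) + a) + (c + d) = (2 * a + c) + (2 * b + d) := by ring
  have htor : 2 * ((a : ℝ) + b) + c + d = (2 * a + c) + (2 * b + d) := by ring
  simp only [tornheimTerm, eulerTerm, Prod.swap_prod_mk, pow_one, hsum, hsum', htor]
  exact one_div_cube_mul_mul_add_eq (by positivity) (by positivity)

/-- With `m = 2a + 1` the `b`-th terms are `(1/n - 1/(n + m)) / m⁴` for `n = 2b + 1` and
`n = 2b + 2`; only together, over all `n`, do they telescope. -/
theorem hasSum_tornheimTerm_one_add_two (a : ℕ) :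
    HasSum (fun b ↦ tornheimTerm 1 1 (a, b) + tornheimTerm 1 2 (a, b))
      (1 / (2 * (a : ℝ) + 1) ^ 4 * ∑ i ∈ range (2 * a + 1), 1 / ((i : ℝ) + 1)) := by
  set g : ℕ → ℝ := fun n ↦
    1 / (2 * (a : ℝ) + 1) ^ 4 * (1 / ((n : ℝ) + 1) - 1 / (((n + (2 * a + 1) : ℕ) : ℝ) + 1))
  have hg : HasSum g _ := (hasSum_sub_add_of_antitone (fun _ _ ↦ Nat.one_div_le_one_div)
    tendsto_one_div_add_atTop_nhds_zero_nat (2 * a + 1)).mul_left _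
  have heven (b : ℕ) : tornheimTerm 1 1 (a, b) = g (2 * b) := by
    simp only [tornheimTerm, g]
    push_cast
    field_simp
    ring
  have hodd (b : ℕ) : tornheimTerm 1 2 (a, b) = g (2 * b + 1) := by
    simp only [tornheimTerm, g]
    push_cast
    field_simp
    ring
  have hse := hg.summable.comp_injective (i := fun b ↦ 2 * b) fun _ _ h ↦ by
    dsimp only at h; omega
  have hso := hg.summable.comp_injective (i := fun b ↦ 2 * b + 1) fun _ _ h ↦ by
    dsimp only at h; omega
  simp_rw [heven, hodd]
  rw [← hg.tsum_eq, ← tsum_even_add_odd hse hso]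
  exact hse.hasSum.add hso.hasSum

theorem sum_range_two_mul_add_one_one_div (a : ℕ) :
    ∑ i ∈ range (2 * a + 1), 1 / ((i : ℝ) + 1) = 1 / (2 * (a : ℝ) + 1)
      + ∑ i ∈ range a, 1 / (2 * (i : ℝ) + 1) + ∑ i ∈ range a, 1 / (2 * (i : ℝ) + 2) := by
  rw [sum_range_succ, sum_range_two_mul]
  push_cast
  simp only [add_assoc, one_add_one_eq_two]
  ring

theorem eulerSums_eq_progZeta_one_five :
    eulerSum 1 2 3 2 + eulerSum 1 2 2 3 + 2 * eulerSum 1 2 1 4 + eulerSum 1 3 3 2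
      + eulerSum 1 3 2 3 = progZeta 1 5 := by
  have hL := (hasSum_tornheimTerm le_rfl le_rfl).add (hasSum_tornheimTerm le_rfl one_le_two)
  have hR := ((hasSum_progZeta one_pos (p := 5) (by norm_num)).add
    (hasSum_iterated_eulerSum_add_two (c := 1) (d := 1) (p := 1) (q := 4)
      (summable_eulerTerm le_rfl (by norm_num) (by norm_num) (by norm_num)))).add
    (hasSum_iterated_eulerSum_add_two (c := 2) (d := 1) (p := 1) (q := 4)
      (summable_eulerTerm one_le_two (by norm_num) (by norm_num) (by norm_num)))
  have hfib := (hL.prod_fiberwise hasSum_tornheimTerm_one_add_two).unique (hR.congr_fun fun a ↦ ?_)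
  · norm_num at hfib
    linarith
  · rw [sum_range_two_mul_add_one_one_div]
    simp only [pow_one]
    field_simp

theorem eulerSum_one_two_two_three : eulerSum 1 2 2 3 = 35 / 32 * Z 2 * Z 3 - 31 / 16 * Z 5 := by
  have r1 := progZeta_mul_progZeta (p := 2) (q := 3) one_pos two_pos le_rfl (by norm_num)
  have r2 := progZeta_mul_progZeta (p := 3) (q := 2) one_pos two_pos (by norm_num) le_rfl
  have r3 := progZeta_mul_progZeta (p := 3) (q := 2) one_pos one_pos (by norm_num) le_rfl
  have r3' := eulerSum_self (p := 3) (q := 2) le_rfl le_rfl (by norm_num)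
  have r4 := progZeta_sq_mul_progZeta_cube le_rfl one_le_two
  have r5 := progZeta_sq_mul_progZeta_cube one_le_two le_rfl
  have r6 := progZeta_sq_mul_progZeta_cube le_rfl le_rfl
  have r7 := eulerSums_eq_progZeta_one_five
  simp only [progZeta_two, progZeta_one (by norm_num : 2 ≤ 2), progZeta_one (by norm_num : 2 ≤ 3),
    progZeta_one (by norm_num : 2 ≤ 5)] at r1 r2 r3 r3' r4 r5 r6 r7
  ring_nf at r1 r2 r3 r3' r4 r5 r6 r7 ⊢
  linear_combination -r1 - r2 - (1 / 2) * (r3 + r3') + r4 - r5 - (1 / 2) * r6 - (3 / 2) * r7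

end OddEulerSum

theorem stmt11 :
    (∑' k : ℕ+, h 2 (k : ℕ) / ((k : ℕ) : ℝ) ^ 3) = 35 / 4 * Z 2 * Z 3 - 31 / 2 * Z 5 := by
  have hterm (n : ℕ) : h 2 (n + 1) / ((n + 1 : ℕ) : ℝ) ^ 3
      = 8 * (1 / (2 * (n : ℝ) + 2) ^ 3 * ∑ i ∈ range (n + 1), 1 / (2 * (i : ℝ) + 1) ^ 2) := by
    rw [h]
    push_cast
    field_simp
    ring
  rw [tsum_pnat_eq_tsum_succ (f := fun k ↦ h 2 k / (k : ℝ) ^ 3), tsum_congr hterm, tsum_mul_left,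
    (OddEulerSum.hasSum_iterated_eulerSum (OddEulerSum.summable_eulerTerm (p := 2) (q := 3)
      le_rfl one_le_two (by norm_num) (by norm_num))).tsum_eq,
    OddEulerSum.eulerSum_one_two_two_three]
  ring
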